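/- arXiv:math/0612430 — 2 statements merged into one kernel-verified Lean document; each statement's English description precedes it below -/
import Mathlib

section
/- The Rogers formula for the bivariate Rogers–Szegő polynomials: let q, x, y, t, s ∈ ℂ with |q| < 1, |t| < 1, |s| < 1, |xt| < 1, |xs| < 1, and suppose y·s ≠ q^{-j} for every integer j ≥ 0. Then ∑_{n=0}^∞ ∑_{m=0}^∞ h_{n+m}(x,y|q) t^n s^m / ((q;q)_n (q;q)_m) = [(ys;q)_∞ / ((s;q)_∞ (xs;q)_∞ (xt;q)_∞)] · ∑_{k=0}^∞ (y;q)_k (xs;q)_k t^k / ((q;q)_k (ys;q)_k), where all series converge absolutely. -/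
/-- The q-shifted factorial `(a;q)_n = ∏_{k=0}^{n-1} (1 - a q^k)`. -/
noncomputable def qPoch (a q : ℂ) (n : ℕ) : ℂ :=
  ∏ k ∈ Finset.range n, (1 - a * q ^ k)

/-- The infinite q-shifted factorial `(a;q)_∞ = ∏_{k=0}^{∞} (1 - a q^k)`. -/
noncomputable def qPochInf (a q : ℂ) : ℂ :=
  ∏' k : ℕ, (1 - a * q ^ k)

/-- The Gaussian binomial coefficient `[n,k]_q`. -/
noncomputable def qBinom (q : ℂ) (n k : ℕ) : ℂ :=
  qPoch q q n / (qPoch q q k * qPoch q q (n - k))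

/-- The Cauchy polynomial `P_n(x,y) = ∏_{k=0}^{n-1} (x - q^k y)`. -/
noncomputable def cauchyP (q x y : ℂ) (n : ℕ) : ℂ :=
  ∏ k ∈ Finset.range n, (x - q ^ k * y)

/-- The bivariate Rogers–Szegő polynomial `h_n(x,y|q)`. -/
noncomputable def hRS2 (q x y : ℂ) (n : ℕ) : ℂ :=
  ∑ k ∈ Finset.range (n + 1), qBinom q n k * cauchyP q x y k

/-- The Rogers–Szegő polynomial `h_n(x|q)`. -/
noncomputable def hRS (q x : ℂ) (n : ℕ) : ℂ :=
  ∑ k ∈ Finset.range (n + 1), qBinom q n k * x ^ k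

/-- The continuous big q-Hermite polynomial `H_n(cos θ; a | q)`. -/
noncomputable def bigH (q a θ : ℂ) (n : ℕ) : ℂ :=
  ∑ k ∈ Finset.range (n + 1),
    qBinom q n k * qPoch (a * Complex.exp (Complex.I * θ)) q k *
      Complex.exp (Complex.I * ((n : ℂ) - 2 * (k : ℂ)) * θ)

/-!
Write `G_{x,y}(u) = ∑ₖ Pₖ(x,y) uᵏ / (q;q)ₖ` (`cauchySeries`). Iterating the functional equation
`(1 - xu) G(u) = (1 - yu) G(qu)` and letting `qⁿu → 0` gives the q-binomial theorem
`G_{x,y}(u) = (yu;q)_∞ / (xu;q)_∞`. The q-Vandermonde identity and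
`P_{j+i}(x,y) = P_j(x,y) P_i(x,qʲy)` factor the double series as
`∑ⱼ P_j(x,y) sʲ/(q;q)ⱼ · G_{x,qʲy}(t) G_{1,0}(qʲt) · G_{1,0}(s)`, whose middle factor is
`G_{1,y}(qʲt) / (xt;q)_∞` by the q-binomial theorem. Expanding `G_{1,y}(qʲt)` and interchanging
the two sums gives `∑ₖ (y;q)ₖ tᵏ/(q;q)ₖ · G_{x,y}(qᵏs)`, and the q-binomial theorem once more
evaluates `G_{x,y}(qᵏs) = (ys;q)_∞ (xs;q)ₖ / ((xs;q)_∞ (ys;q)ₖ)`. Every rearrangement is dominated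
termwise by `∏_{l<k} (‖x‖ + ‖q‖ˡ‖y‖) ‖u‖ / ‖1 - q^{l+1}‖` (`cauchyMajorant`).
-/

open Finset Filter Topology

lemma summable_prod_range_of_tendsto {r : ℕ → ℝ} {L : ℝ} (hr₀ : ∀ l, 0 ≤ r l)
    (hr : Tendsto r atTop (𝓝 L)) (hL : L < 1) : Summable fun k => ∏ l ∈ range k, r l := by
  obtain ⟨ρ, hLρ, hρ⟩ := exists_between hL
  refine summable_of_ratio_norm_eventually_le hρ ?_
  filter_upwards [hr.eventually (eventually_le_nhds hLρ)] with k hk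
  rw [prod_range_succ, norm_mul, mul_comm, Real.norm_of_nonneg (hr₀ k)]
  exact mul_le_mul_of_nonneg_right hk (norm_nonneg _)

section QPochhammer

variable {a q : ℂ}

lemma qPoch_zero (a q : ℂ) : qPoch a q 0 = 1 := prod_range_zero _

lemma qPoch_succ (a q : ℂ) (n : ℕ) : qPoch a q (n + 1) = qPoch a q n * (1 - a * q ^ n) :=
  prod_range_succ _ _

lemma qPoch_add (a q : ℂ) (k n : ℕ) :
    qPoch a q (k + n) = qPoch a q k * qPoch (a * q ^ k) q n := by
  simp only [qPoch, prod_range_add, pow_add, mul_assoc]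

lemma qPoch_ne_zero (h : ∀ k : ℕ, a * q ^ k ≠ 1) (n : ℕ) : qPoch a q n ≠ 0 :=
  prod_ne_zero_iff.2 fun k _ => sub_ne_zero.2 (h k).symm

lemma norm_pow_mul_le (hq : ‖q‖ ≤ 1) (a : ℂ) (k : ℕ) : ‖q ^ k * a‖ ≤ ‖a‖ := by
  rw [norm_mul, norm_pow]
  exact mul_le_of_le_one_left (norm_nonneg a) (pow_le_one₀ (norm_nonneg q) hq)

lemma mul_pow_ne_one (hq : ‖q‖ ≤ 1) (ha : ‖a‖ < 1) (k : ℕ) : a * q ^ k ≠ 1 := by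
  intro h
  have := (norm_pow_mul_le hq a k).trans_lt ha
  rw [mul_comm, h, norm_one] at this
  exact this.false

lemma qPoch_self_ne_zero (hq : ‖q‖ < 1) (n : ℕ) : qPoch q q n ≠ 0 :=
  qPoch_ne_zero (mul_pow_ne_one hq.le hq) n

lemma one_sub_mul_pow_ne_zero (hq : ∀ n, qPoch q q n ≠ 0) (k : ℕ) : 1 - q * q ^ k ≠ 0 := by
  have h := hq (k + 1)
  rw [qPoch_succ] at h
  exact right_ne_zero_of_mul h

lemma hasProd_qPochInf (hq : ‖q‖ < 1) (a : ℂ) :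
    HasProd (fun k => 1 - a * q ^ k) (qPochInf a q) := by
  have h : Summable fun k : ℕ => -(a * q ^ k) :=
    ((summable_geometric_of_norm_lt_one hq).mul_left a).neg
  simpa only [qPochInf, ← sub_eq_add_neg] using
    (Complex.multipliable_one_add_of_summable h).hasProd

lemma qPochInf_ne_zero (hq : ‖q‖ < 1) (h : ∀ k : ℕ, a * q ^ k ≠ 1) : qPochInf a q ≠ 0 := by
  have hsum : Summable fun k : ℕ => ‖-(a * q ^ k)‖ := by
    simpa [norm_mul, norm_pow] using
      (summable_geometric_of_lt_one (norm_nonneg q) hq).mul_left ‖a‖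
  simpa only [qPochInf, ← sub_eq_add_neg] using tprod_one_add_ne_zero_of_summable
    (fun k => by rw [← sub_eq_add_neg]; exact sub_ne_zero.2 (h k).symm) hsum

lemma qPochInf_eq_qPoch_mul (hq : ‖q‖ < 1) (a : ℂ) (k : ℕ) :
    qPochInf a q = qPoch a q k * qPochInf (a * q ^ k) q := by
  have hshift := (hasProd_qPochInf hq a).tendsto_prod_nat.comp (tendsto_add_atTop_nat k)
  refine tendsto_nhds_unique (hshift.congr fun n => ?_)
    ((hasProd_qPochInf hq (a * q ^ k)).tendsto_prod_nat.const_mul _)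
  exact (add_comm n k ▸ qPoch_add a q k n :)

lemma qPochInf_zero_left (q : ℂ) : qPochInf 0 q = 1 := by
  simp [qPochInf]

lemma summable_qHypergeometric {a b c t : ℂ} (hq : ‖q‖ < 1) (ht : ‖t‖ < 1) :
    Summable fun k => qPoch a q k * qPoch b q k * t ^ k / (qPoch q q k * qPoch c q k) := by
  have hprod (k : ℕ) : qPoch a q k * qPoch b q k * t ^ k / (qPoch q q k * qPoch c q k) =
      ∏ l ∈ range k,
        (1 - a * q ^ l) * (1 - b * q ^ l) * t / ((1 - q * q ^ l) * (1 - c * q ^ l)) := by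
    simp only [qPoch, prod_div_distrib, prod_mul_distrib, prod_const, card_range]
  refine Summable.of_norm ?_
  simp only [hprod, norm_prod]
  refine summable_prod_range_of_tendsto (fun _ => norm_nonneg _) ?_ ht
  have hφ : ContinuousAt
      (fun z => (1 - a * z) * (1 - b * z) * t / ((1 - q * z) * (1 - c * z))) 0 := by
    fun_prop (disch := simp)
  simpa using (hφ.tendsto.comp (tendsto_pow_atTop_nhds_zero_of_norm_lt_one hq)).norm

end QPochhammer

lemma cauchyP_zero (q x y : ℂ) : cauchyP q x y 0 = 1 := prod_range_zero _

lemma cauchyP_succ (q x y : ℂ) (n : ℕ) :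
    cauchyP q x y (n + 1) = cauchyP q x y n * (x - q ^ n * y) :=
  prod_range_succ _ _

lemma cauchyP_add (q x y : ℂ) (j i : ℕ) :
    cauchyP q x y (j + i) = cauchyP q x y j * cauchyP q x (q ^ j * y) i := by
  rw [cauchyP, prod_range_add]
  exact congrArg _ (prod_congr rfl fun _ _ => by ring)

lemma cauchyP_one_left (q y : ℂ) (n : ℕ) : cauchyP q 1 y n = qPoch y q n :=
  prod_congr rfl fun _ _ => by ring

lemma cauchyP_one_zero (q : ℂ) (n : ℕ) : cauchyP q 1 0 n = 1 := by
  simp [cauchyP]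

section QBinomial

variable {q : ℂ}

lemma qBinom_zero_right (hq : ∀ n, qPoch q q n ≠ 0) (n : ℕ) : qBinom q n 0 = 1 := by
  rw [qBinom, Nat.sub_zero, qPoch_zero, one_mul, div_self (hq n)]

lemma qBinom_self (hq : ∀ n, qPoch q q n ≠ 0) (n : ℕ) : qBinom q n n = 1 := by
  rw [qBinom, Nat.sub_self, qPoch_zero, mul_one, div_self (hq n)]

-- `k < N` matters: by truncated subtraction `qBinom q N (N + 1) = 1 / (1 - q ^ (N + 1))`, not `0`.
lemma qBinom_succ_succ (hq : ∀ n, qPoch q q n ≠ 0) {k N : ℕ} (hk : k < N) :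
    qBinom q (N + 1) (k + 1) = qBinom q N (k + 1) + q ^ (N - k) * qBinom q N k := by
  obtain ⟨d, rfl⟩ : ∃ d, N = k + d + 1 := ⟨N - k - 1, by omega⟩
  have e₁ : k + d + 1 + 1 - (k + 1) = d + 1 := by omega
  have e₂ : k + d + 1 - (k + 1) = d := by omega
  have e₃ : k + d + 1 - k = d + 1 := by omega
  have := one_sub_mul_pow_ne_zero hq k
  have := one_sub_mul_pow_ne_zero hq d
  have := hq k
  have := hq d
  simp only [qBinom, e₁, e₂, e₃, qPoch_succ q q (k + d + 1), qPoch_succ q q d, qPoch_succ q q k]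
  field_simp
  ring

lemma sum_qBinom_succ (hq : ∀ n, qPoch q q n ≠ 0) (N : ℕ) (f : ℕ → ℂ) :
    ∑ k ∈ range (N + 2), qBinom q (N + 1) k * f k =
      ∑ k ∈ range (N + 1), qBinom q N k * (f k + q ^ (N - k) * f (k + 1)) := by
  rw [sum_range_succ', sum_range_succ (fun k => qBinom q (N + 1) (k + 1) * f (k + 1)),
    sum_congr rfl fun k hk => show qBinom q (N + 1) (k + 1) * f (k + 1) =
      qBinom q N (k + 1) * f (k + 1) + qBinom q N k * (q ^ (N - k) * f (k + 1)) by
        rw [qBinom_succ_succ hq (mem_range.1 hk)]; ring]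
  simp only [mul_add, sum_add_distrib]
  rw [sum_range_succ' (fun k => qBinom q N k * f k),
    sum_range_succ (fun k => qBinom q N k * (q ^ (N - k) * f (k + 1)))]
  simp only [qBinom_zero_right hq, qBinom_self hq, Nat.sub_self, pow_zero, one_mul]
  abel

theorem qVandermonde (hq : ∀ n, qPoch q q n ≠ 0) (n m : ℕ) (c : ℕ → ℂ) :
    ∑ k ∈ range (n + m + 1), qBinom q (n + m) k * c k =
      ∑ j ∈ range (m + 1), qBinom q m j *
        ∑ i ∈ range (n + 1), qBinom q n i * q ^ (j * (n - i)) * c (i + j) := by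
  induction m generalizing c with
  | zero => simp [qBinom_zero_right hq]
  | succ m ih =>
    change ∑ k ∈ range (n + m + 2), qBinom q (n + m + 1) k * c k =
      ∑ j ∈ range (m + 2), qBinom q (m + 1) j * _
    rw [sum_qBinom_succ hq, ih, sum_qBinom_succ hq]
    refine sum_congr rfl fun j hj => congrArg _ ?_
    rw [mul_sum, ← sum_add_distrib]
    refine sum_congr rfl fun i hi => ?_
    have hexp : n + m - (i + j) = (n - i) + (m - j) := by
      have := mem_range_succ_iff.1 hi
      have := mem_range_succ_iff.1 hj
      omega
    rw [hexp, ← add_assoc i j 1]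
    ring

end QBinomial

noncomputable def cauchyTerm (q x y u : ℂ) (k : ℕ) : ℂ :=
  cauchyP q x y k * u ^ k / qPoch q q k

noncomputable def cauchySeries (q x y u : ℂ) : ℂ :=
  ∑' k, cauchyTerm q x y u k

noncomputable def cauchyMajorant (q x y u : ℂ) (k : ℕ) : ℝ :=
  ∏ l ∈ range k, (‖x‖ + ‖q‖ ^ l * ‖y‖) * ‖u‖ / ‖1 - q * q ^ l‖

section CauchySeries

variable {q x y u : ℂ}

lemma cauchyTerm_zero (q x y u : ℂ) : cauchyTerm q x y u 0 = 1 := by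
  simp [cauchyTerm, cauchyP_zero, qPoch_zero]

lemma cauchyTerm_mul_left (c : ℂ) (k : ℕ) :
    cauchyTerm q x y (c * u) k = c ^ k * cauchyTerm q x y u k := by
  simp only [cauchyTerm, mul_pow]
  ring

lemma cauchyTerm_eq_prod (k : ℕ) :
    cauchyTerm q x y u k = ∏ l ∈ range k, (x - q ^ l * y) * u / (1 - q * q ^ l) := by
  simp only [cauchyTerm, cauchyP, qPoch, prod_div_distrib, prod_mul_distrib, prod_const,
    card_range]

lemma cauchyTerm_succ_sub {k : ℕ} (hk : 1 - q * q ^ k ≠ 0) :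
    cauchyTerm q x y u (k + 1) - cauchyTerm q x y (q * u) (k + 1) =
      x * u * cauchyTerm q x y u k - y * u * cauchyTerm q x y (q * u) k := by
  calc _ = cauchyP q x y k * (x - q ^ k * y) * u ^ (k + 1) * (1 - q * q ^ k) /
        (qPoch q q k * (1 - q * q ^ k)) := by
        simp only [cauchyTerm, cauchyP_succ, qPoch_succ, mul_pow, pow_succ]; ring
    _ = cauchyP q x y k * (x - q ^ k * y) * u ^ (k + 1) / qPoch q q k :=
        mul_div_mul_right _ _ hk
    _ = _ := by simp only [cauchyTerm, mul_pow]; ring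

lemma cauchyMajorant_nonneg (k : ℕ) : 0 ≤ cauchyMajorant q x y u k :=
  prod_nonneg fun _ _ => by positivity

lemma summable_cauchyMajorant (hq : ‖q‖ < 1) (hxu : ‖x * u‖ < 1) :
    Summable (cauchyMajorant q x y u) := by
  have hpow := tendsto_pow_atTop_nhds_zero_of_norm_lt_one hq
  have hden : Tendsto (fun l : ℕ => ‖1 - q * q ^ l‖) atTop (𝓝 1) := by
    simpa using ((hpow.const_mul q).const_sub 1).norm
  refine summable_prod_range_of_tendsto (fun _ => by positivity) ?_ (by rwa [norm_mul] at hxu)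
  simpa [Pi.div_def] using
    (((hpow.norm.mul_const ‖y‖).const_add ‖x‖).mul_const ‖u‖).div hden one_ne_zero

lemma norm_cauchyTerm_le {y' u' : ℂ} (hy : ‖y'‖ ≤ ‖y‖) (hu : ‖u'‖ ≤ ‖u‖) (k : ℕ) :
    ‖cauchyTerm q x y' u' k‖ ≤ cauchyMajorant q x y u k := by
  rw [cauchyTerm_eq_prod, norm_prod]
  refine prod_le_prod (fun _ _ => norm_nonneg _) fun l _ => ?_
  rw [norm_div, norm_mul]
  gcongr
  calc ‖x - q ^ l * y'‖ ≤ ‖x‖ + ‖q ^ l * y'‖ := norm_sub_le _ _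
    _ ≤ ‖x‖ + ‖q‖ ^ l * ‖y‖ := by rw [norm_mul, norm_pow]; gcongr

lemma summable_norm_cauchyTerm (hq : ‖q‖ < 1) (hxu : ‖x * u‖ < 1) :
    Summable fun k => ‖cauchyTerm q x y u k‖ :=
  (summable_cauchyMajorant hq hxu).of_nonneg_of_le (fun _ => norm_nonneg _)
    (norm_cauchyTerm_le le_rfl le_rfl)

lemma norm_mul_pow_mul_lt_one (hq : ‖q‖ ≤ 1) (hxu : ‖x * u‖ < 1) (k : ℕ) :
    ‖x * (q ^ k * u)‖ < 1 := by
  rw [mul_left_comm]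
  exact (norm_pow_mul_le hq _ k).trans_lt hxu

lemma cauchySeries_zero_right (q x y : ℂ) : cauchySeries q x y 0 = 1 := by
  rw [cauchySeries, tsum_eq_single 0 fun k hk => by simp [cauchyTerm, zero_pow hk],
    cauchyTerm_zero]

lemma cauchySeries_functional_eq (hq : ‖q‖ < 1) (hxu : ‖x * u‖ < 1) :
    (1 - x * u) * cauchySeries q x y u = (1 - y * u) * cauchySeries q x y (q * u) := by
  have hqu : ‖x * (q * u)‖ < 1 := by simpa using norm_mul_pow_mul_lt_one hq.le hxu 1
  have ha := (summable_norm_cauchyTerm (y := y) hq hxu).of_norm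
  have hb := (summable_norm_cauchyTerm (y := y) hq hqu).of_norm
  have key : cauchySeries q x y u - cauchySeries q x y (q * u) =
      x * u * cauchySeries q x y u - y * u * cauchySeries q x y (q * u) := by
    rw [cauchySeries, cauchySeries, ← ha.tsum_sub hb, (ha.sub hb).tsum_eq_zero_add,
      ← tsum_mul_left, ← tsum_mul_left, ← (ha.mul_left _).tsum_sub (hb.mul_left _)]
    simp only [cauchyTerm_zero, sub_self, zero_add,
      cauchyTerm_succ_sub (sub_ne_zero.2 (mul_pow_ne_one hq.le hq _).symm)]
  linear_combination key

lemma qPoch_mul_cauchySeries (hq : ‖q‖ < 1) (hxu : ‖x * u‖ < 1) (n : ℕ) :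
    qPoch (x * u) q n * cauchySeries q x y u =
      qPoch (y * u) q n * cauchySeries q x y (q ^ n * u) := by
  induction n with
  | zero => simp [qPoch_zero]
  | succ n ih =>
    have h := cauchySeries_functional_eq (y := y) hq (norm_mul_pow_mul_lt_one hq.le hxu n)
    rw [qPoch_succ, qPoch_succ, show q ^ (n + 1) * u = q * (q ^ n * u) by ring]
    linear_combination (1 - x * u * q ^ n) * ih + qPoch (y * u) q n * h

lemma tendsto_cauchySeries_pow_mul (hq : ‖q‖ < 1) (hxu : ‖x * u‖ < 1) :
    Tendsto (fun n : ℕ => cauchySeries q x y (q ^ n * u)) atTop (𝓝 1) := by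
  have hlim : Tendsto (fun n : ℕ => q ^ n * u) atTop (𝓝 0) := by
    simpa using (tendsto_pow_atTop_nhds_zero_of_norm_lt_one hq).mul_const u
  have hcont (k : ℕ) : Continuous fun v => cauchyTerm q x y v k := by
    unfold cauchyTerm; fun_prop
  rw [← cauchySeries_zero_right q x y]
  exact tendsto_tsum_of_dominated_convergence (summable_cauchyMajorant hq hxu)
    (fun k => ((hcont k).tendsto 0).comp hlim)
    (Eventually.of_forall fun n k => norm_cauchyTerm_le le_rfl (norm_pow_mul_le hq.le u n) k)

theorem cauchySeries_mul_qPochInf (hq : ‖q‖ < 1) (hxu : ‖x * u‖ < 1) :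
    cauchySeries q x y u * qPochInf (x * u) q = qPochInf (y * u) q := by
  have hleft := (hasProd_qPochInf hq (x * u)).tendsto_prod_nat.mul_const (cauchySeries q x y u)
  have hright := (hasProd_qPochInf hq (y * u)).tendsto_prod_nat.mul
    (tendsto_cauchySeries_pow_mul (y := y) hq hxu)
  rw [mul_one] at hright
  rw [mul_comm]
  exact tendsto_nhds_unique (hleft.congr (qPoch_mul_cauchySeries hq hxu)) hright

lemma cauchySeries_eq_div (hq : ‖q‖ < 1) (hxu : ‖x * u‖ < 1) :
    cauchySeries q x y u = qPochInf (y * u) q / qPochInf (x * u) q :=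
  eq_div_of_mul_eq (qPochInf_ne_zero hq (mul_pow_ne_one hq.le hxu))
    (cauchySeries_mul_qPochInf hq hxu)

lemma tsum_cauchyTerm_mul_cauchySeries_comm {x y x' y' s t : ℂ} (hq : ‖q‖ < 1)
    (hxs : ‖x * s‖ < 1) (hxt : ‖x' * t‖ < 1) :
    ∑' j, cauchyTerm q x y s j * cauchySeries q x' y' (q ^ j * t) =
      ∑' k, cauchyTerm q x' y' t k * cauchySeries q x y (q ^ k * s) := by
  have hF : Summable fun p : ℕ × ℕ =>
      cauchyTerm q x y s p.1 * cauchyTerm q x' y' (q ^ p.1 * t) p.2 := by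
    refine .of_norm_bounded ((summable_cauchyMajorant (y := y) hq hxs).mul_of_nonneg
      (summable_cauchyMajorant (y := y') hq hxt) cauchyMajorant_nonneg cauchyMajorant_nonneg)
      fun p => ?_
    rw [norm_mul]
    exact mul_le_mul (norm_cauchyTerm_le le_rfl le_rfl _)
      (norm_cauchyTerm_le le_rfl (norm_pow_mul_le hq.le t _) _) (norm_nonneg _)
      (cauchyMajorant_nonneg _)
  simp only [cauchySeries, ← tsum_mul_left]
  rw [← Summable.tsum_comm (f := fun j k =>
    cauchyTerm q x y s j * cauchyTerm q x' y' (q ^ j * t) k) hF]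
  refine tsum_congr fun k => tsum_congr fun j => ?_
  rw [cauchyTerm_mul_left, cauchyTerm_mul_left, ← pow_mul, ← pow_mul, mul_comm j k]
  ring

end CauchySeries

noncomputable def rogersTerm (q x y t s : ℂ) (n j : ℕ) : ℂ :=
  cauchyTerm q x y s j * ∑ i ∈ range (n + 1),
    cauchyTerm q x (q ^ j * y) t i * cauchyTerm q 1 0 (q ^ j * t) (n - i)

noncomputable def hRS2Majorant (q x y u : ℂ) (n : ℕ) : ℝ :=
  ∑ i ∈ range (n + 1), cauchyMajorant q x y u i * cauchyMajorant q 1 0 u (n - i)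

section Rogers

variable {q x y t s : ℂ}

lemma hRS2_add_mul_div (hq : ∀ n, qPoch q q n ≠ 0) (n m : ℕ) :
    hRS2 q x y (n + m) * t ^ n * s ^ m / (qPoch q q n * qPoch q q m) =
      ∑ j ∈ range (m + 1), rogersTerm q x y t s n j * cauchyTerm q 1 0 s (m - j) := by
  rw [hRS2, qVandermonde hq, sum_mul, sum_mul, sum_div]
  refine sum_congr rfl fun j hj => ?_
  obtain ⟨b, rfl⟩ := Nat.exists_eq_add_of_le (mem_range_succ_iff.1 hj)
  simp only [rogersTerm, mul_sum, sum_mul, sum_div]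
  refine sum_congr rfl fun i hi => ?_
  obtain ⟨a, rfl⟩ := Nat.exists_eq_add_of_le (mem_range_succ_iff.1 hi)
  have := hq i
  have := hq a
  have := hq j
  have := hq b
  have := hq (i + a)
  have := hq (j + b)
  rw [add_comm i j, cauchyP_add]
  simp only [Nat.add_sub_cancel_left, qBinom, cauchyTerm, cauchyP_one_zero, pow_add, mul_pow,
    ← pow_mul]
  field_simp

lemma hRS2Majorant_nonneg {u : ℂ} (n : ℕ) : 0 ≤ hRS2Majorant q x y u n :=
  sum_nonneg fun _ _ => mul_nonneg (cauchyMajorant_nonneg _) (cauchyMajorant_nonneg _)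

lemma summable_hRS2Majorant {u : ℂ} (hq : ‖q‖ < 1) (hu : ‖u‖ < 1) (hxu : ‖x * u‖ < 1) :
    Summable (hRS2Majorant q x y u) :=
  summable_sum_mul_range_of_summable_mul <| (summable_cauchyMajorant hq hxu).mul_of_nonneg
    (summable_cauchyMajorant hq (by rwa [one_mul])) cauchyMajorant_nonneg cauchyMajorant_nonneg

lemma norm_rogersTerm_le (hq : ‖q‖ ≤ 1) (n j : ℕ) :
    ‖rogersTerm q x y t s n j‖ ≤ cauchyMajorant q x y s j * hRS2Majorant q x y t n := by
  rw [rogersTerm, norm_mul]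
  refine mul_le_mul (norm_cauchyTerm_le le_rfl le_rfl j)
    ((norm_sum_le _ _).trans (sum_le_sum fun i _ => ?_)) (norm_nonneg _) (cauchyMajorant_nonneg _)
  rw [norm_mul]
  exact mul_le_mul (norm_cauchyTerm_le (norm_pow_mul_le hq y j) le_rfl i)
    (norm_cauchyTerm_le le_rfl (norm_pow_mul_le hq t j) _) (norm_nonneg _) (cauchyMajorant_nonneg _)

lemma norm_hRS2_add_mul_div_le (hq : ‖q‖ < 1) (n m : ℕ) :
    ‖hRS2 q x y (n + m) * t ^ n * s ^ m / (qPoch q q n * qPoch q q m)‖ ≤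
      hRS2Majorant q x y t n * hRS2Majorant q x y s m := by
  rw [hRS2_add_mul_div (qPoch_self_ne_zero hq), hRS2Majorant.eq_1 q x y s m, mul_sum]
  refine (norm_sum_le _ _).trans (sum_le_sum fun j _ => ?_)
  rw [norm_mul]
  calc _ ≤ cauchyMajorant q x y s j * hRS2Majorant q x y t n * cauchyMajorant q 1 0 s (m - j) :=
        mul_le_mul (norm_rogersTerm_le hq.le n j) (norm_cauchyTerm_le le_rfl le_rfl _)
          (norm_nonneg _) (mul_nonneg (cauchyMajorant_nonneg _) (hRS2Majorant_nonneg _))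
    _ = _ := by ring

theorem summable_hRS2_add_mul_div (hq : ‖q‖ < 1) (ht : ‖t‖ < 1) (hs : ‖s‖ < 1)
    (hxt : ‖x * t‖ < 1) (hxs : ‖x * s‖ < 1) :
    Summable fun p : ℕ × ℕ =>
      hRS2 q x y (p.1 + p.2) * t ^ p.1 * s ^ p.2 / (qPoch q q p.1 * qPoch q q p.2) :=
  .of_norm_bounded ((summable_hRS2Majorant hq ht hxt).mul_of_nonneg
    (summable_hRS2Majorant hq hs hxs) hRS2Majorant_nonneg hRS2Majorant_nonneg)
    fun p => norm_hRS2_add_mul_div_le hq p.1 p.2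

lemma tsum_rogersTerm (hq : ‖q‖ < 1) (ht : ‖t‖ < 1) (hxt : ‖x * t‖ < 1) (j : ℕ) :
    ∑' n, rogersTerm q x y t s n j =
      cauchyTerm q x y s j * (cauchySeries q x (q ^ j * y) t * cauchySeries q 1 0 (q ^ j * t)) := by
  have hqt : ‖1 * (q ^ j * t)‖ < 1 := by
    rw [one_mul]; exact (norm_pow_mul_le hq.le t j).trans_lt ht
  rw [cauchySeries, cauchySeries, tsum_mul_tsum_eq_tsum_sum_range_of_summable_norm
    (summable_norm_cauchyTerm hq hxt) (summable_norm_cauchyTerm hq hqt), ← tsum_mul_left]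
  rfl

lemma tsum_hRS2_add_mul_div (hq : ‖q‖ < 1) (ht : ‖t‖ < 1) (hs : ‖s‖ < 1)
    (hxt : ‖x * t‖ < 1) (hxs : ‖x * s‖ < 1) :
    ∑' p : ℕ × ℕ,
      hRS2 q x y (p.1 + p.2) * t ^ p.1 * s ^ p.2 / (qPoch q q p.1 * qPoch q q p.2) =
      (∑' j, cauchyTerm q x y s j *
        (cauchySeries q x (q ^ j * y) t * cauchySeries q 1 0 (q ^ j * t))) *
        cauchySeries q 1 0 s := by
  have hrow (n : ℕ) : Summable fun j => ‖rogersTerm q x y t s n j‖ :=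
    ((summable_cauchyMajorant hq hxs).mul_right _).of_nonneg_of_le (fun _ => norm_nonneg _)
      (norm_rogersTerm_le hq.le n)
  have hW : Summable (Function.uncurry (rogersTerm q x y t s)) :=
    .of_norm_bounded ((summable_hRS2Majorant hq ht hxt).mul_of_nonneg
      (summable_cauchyMajorant hq hxs) hRS2Majorant_nonneg cauchyMajorant_nonneg)
      fun p => (norm_rogersTerm_le hq.le p.1 p.2).trans_eq (mul_comm _ _)
  have hD : Summable fun k => ‖cauchyTerm q 1 0 s k‖ :=
    summable_norm_cauchyTerm hq (by rwa [one_mul])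
  calc _ = ∑' n, ∑' m,
        hRS2 q x y (n + m) * t ^ n * s ^ m / (qPoch q q n * qPoch q q m) :=
        (summable_hRS2_add_mul_div hq ht hs hxt hxs).tsum_prod
    _ = ∑' n, (∑' j, rogersTerm q x y t s n j) * cauchySeries q 1 0 s := by
        refine tsum_congr fun n => ?_
        rw [cauchySeries, tsum_mul_tsum_eq_tsum_sum_range_of_summable_norm (hrow n) hD]
        exact tsum_congr fun m => hRS2_add_mul_div (qPoch_self_ne_zero hq) n m
    _ = _ := by
        rw [tsum_mul_right, ← hW.tsum_comm]
        simp only [tsum_rogersTerm hq ht hxt]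

lemma cauchySeries_mul_cauchySeries_one_zero {c : ℂ} (hq : ‖q‖ < 1) (hxt : ‖x * t‖ < 1)
    (hct : ‖c * t‖ < 1) :
    cauchySeries q x (c * y) t * cauchySeries q 1 0 (c * t) =
      cauchySeries q 1 y (c * t) / qPochInf (x * t) q := by
  have hct' : ‖1 * (c * t)‖ < 1 := by rwa [one_mul]
  rw [cauchySeries_eq_div hq hxt, cauchySeries_eq_div hq hct', cauchySeries_eq_div hq hct',
    zero_mul, qPochInf_zero_left, show c * y * t = y * (c * t) by ring]
  ring

lemma cauchySeries_pow_mul_eq {k : ℕ} (hq : ‖q‖ < 1) (hxs : ‖x * s‖ < 1)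
    (hys : qPoch (y * s) q k ≠ 0) :
    cauchySeries q x y (q ^ k * s) =
      qPochInf (y * s) q / qPochInf (x * s) q * (qPoch (x * s) q k / qPoch (y * s) q k) := by
  have hxs' : qPoch (s * x) q k ≠ 0 :=
    mul_comm x s ▸ qPoch_ne_zero (mul_pow_ne_one hq.le hxs) k
  rw [cauchySeries_eq_div hq (norm_mul_pow_mul_lt_one hq.le hxs k),
    qPochInf_eq_qPoch_mul hq (y * s) k, qPochInf_eq_qPoch_mul hq (x * s) k,
    show y * (q ^ k * s) = y * s * q ^ k by ring, show x * (q ^ k * s) = x * s * q ^ k by ring]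
  field_simp

end Rogers

/-- The Rogers formula for the bivariate Rogers–Szegő polynomials. -/
theorem rogers_formula_bivariate (q x y t s : ℂ)
    (hq : ‖q‖ < 1) (ht : ‖t‖ < 1) (hs : ‖s‖ < 1) (hxt : ‖x * t‖ < 1) (hxs : ‖x * s‖ < 1)
    (hys : ∀ j : ℕ, y * s * q ^ j ≠ 1) :
    Summable (fun p : ℕ × ℕ =>
      hRS2 q x y (p.1 + p.2) * t ^ p.1 * s ^ p.2 / (qPoch q q p.1 * qPoch q q p.2)) ∧
    Summable (fun k : ℕ => qPoch y q k * qPoch (x * s) q k * t ^ k /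
      (qPoch q q k * qPoch (y * s) q k)) ∧
    ∑' p : ℕ × ℕ,
      hRS2 q x y (p.1 + p.2) * t ^ p.1 * s ^ p.2 / (qPoch q q p.1 * qPoch q q p.2) =
      qPochInf (y * s) q / (qPochInf s q * qPochInf (x * s) q * qPochInf (x * t) q) *
        ∑' k : ℕ, qPoch y q k * qPoch (x * s) q k * t ^ k /
          (qPoch q q k * qPoch (y * s) q k) := by
  refine ⟨summable_hRS2_add_mul_div hq ht hs hxt hxs, summable_qHypergeometric hq ht, ?_⟩
  have h1t : ‖1 * t‖ < 1 := by rwa [one_mul]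
  have h1s : ‖1 * s‖ < 1 := by rwa [one_mul]
  have houter (k : ℕ) : cauchyTerm q 1 y t k * cauchySeries q x y (q ^ k * s) =
      qPochInf (y * s) q / qPochInf (x * s) q *
        (qPoch y q k * qPoch (x * s) q k * t ^ k / (qPoch q q k * qPoch (y * s) q k)) := by
    rw [cauchyTerm, cauchyP_one_left, cauchySeries_pow_mul_eq hq hxs (qPoch_ne_zero hys k)]
    ring
  calc _ = (∑' j, cauchyTerm q x y s j * cauchySeries q 1 y (q ^ j * t)) /
        qPochInf (x * t) q * cauchySeries q 1 0 s := by
        rw [tsum_hRS2_add_mul_div hq ht hs hxt hxs, ← tsum_div_const]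
        refine congrArg (· * _) (tsum_congr fun j => ?_)
        rw [cauchySeries_mul_cauchySeries_one_zero hq hxt
          ((norm_pow_mul_le hq.le t j).trans_lt ht), mul_div_assoc]
    _ = (∑' k, cauchyTerm q 1 y t k * cauchySeries q x y (q ^ k * s)) /
        (qPochInf (x * t) q * qPochInf s q) := by
        rw [tsum_cauchyTerm_mul_cauchySeries_comm hq hxs h1t, cauchySeries_eq_div hq h1s,
          zero_mul, qPochInf_zero_left, one_mul]
        ring
    _ = _ := by
        rw [tsum_congr houter, tsum_mul_left]
        ring
end

section
/- Linearization identity from the Rogers formula (Corollary 3.2): for every q ∈ ℂ with |q| < 1, all x, y ∈ ℂ, and all integers n, m ≥ 0, ∑_{k=0}^{n} ∑_{l=0}^{m} [n,k]_q [m,l]_q (y;q)_k P_l(x,y) h_{n+m-k-l}(x,y|q) = ∑_{k=0}^{n} ∑_{l=0}^{m} [n,k]_q [m,l]_q (y;q)_k q^{kl} P_l(x,y) h_{n-k}(x,y|q) h_{m-l}(x,y|q). (Note that (y/x;q)_l x^l = P_l(x,y) and (y/x;q)_l (x q^k)^l = q^{kl} P_l(x,y), so this is the identity ∑∑ [n,k][m,l](y;q)_k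 (y/x;q)_l x^l h_{n+m-k-l} = ∑∑ [n,k][m,l](y;q)_k (y/x;q)_l (xq^k)^l h_{n-k} h_{m-l} written without division by x.) -/
/-!
Let `C(t) = ∑ Pₙ(x,y) tⁿ/(q;q)ₙ` and `H(t) = ∑ hₙ(x,y|q) tⁿ/(q;q)ₙ`, so that `H(t) = C(t) e_q(t)`.
Then `H` is the solution with `H(0) = 1` of `H(qt)(1 - yt) = H(t)(1 - xt)(1 - t)`, an equation
which determines a power series from its constant term when `q` is not a root of unity. The product
of `∑ (y;q)ₙ tⁿ/(q;q)ₙ` and `∑ xⁿ tⁿ/(q;q)ₙ` solves it too, whence `hₙ = ∑ₖ [n,k] (y;q)ₖ x^(n-k)`.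

Let `G_a(t) = ∑ₙ h_{a+n} tⁿ/(q;q)ₙ`, so that `t G_{a+1}(t) = G_a(t) - G_a(qt)`, and
`S_a(t) = ∑ₖ [a,k] (y;q)ₖ x^(a-k) C(qᵏt)`. Inducting on `a` with the q-difference equations of `C`
and `H` gives `C G_a = S_a H`, that is
`∑ₗ [m,l] Pₗ h_{a+m-l} = ∑ₖ [a,k] (y;q)ₖ x^(a-k) K(k)` with `K(k) = ∑ₗ [m,l] q^(kl) Pₗ h_{m-l}`.
Using this with `a = n - k` on the left of the identity, and the expansion of `h_{n-k}` on the
right, both sides become sums over `k + j ≤ n` of `[n,k][n-k,j] (y;q)ₖ (y;q)ⱼ x^(n-k-j)` times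
`K(j)`, resp. `K(k)`; they agree by the symmetry `[n,k][n-k,j] = [n,j][n-j,k]`.
-/

open PowerSeries Finset

namespace RogersSzego

lemma qPoch_zero (a q : ℂ) : qPoch a q 0 = 1 := prod_range_zero _

lemma qPoch_succ (a q : ℂ) (n : ℕ) : qPoch a q (n + 1) = qPoch a q n * (1 - a * q ^ n) :=
  prod_range_succ _ _

lemma cauchyP_succ (q u v : ℂ) (n : ℕ) :
    cauchyP q u v (n + 1) = cauchyP q u v n * (u - q ^ n * v) :=
  prod_range_succ _ _

lemma cauchyP_one_left (q v : ℂ) (n : ℕ) : cauchyP q 1 v n = qPoch v q n :=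
  prod_congr rfl fun _ _ => by ring

lemma cauchyP_zero_right (q u : ℂ) (n : ℕ) : cauchyP q u 0 n = u ^ n := by
  simp [cauchyP]

variable {q : ℂ}

lemma one_sub_mul_pow_ne_zero (hq : ¬IsOfFinOrder q) (n : ℕ) : 1 - q * q ^ n ≠ 0 := fun h =>
  hq (isOfFinOrder_iff_pow_eq_one.mpr ⟨n + 1, n.succ_pos, by rw [pow_succ']; linear_combination -h⟩)

lemma qPoch_self_ne_zero (hq : ¬IsOfFinOrder q) (n : ℕ) : qPoch q q n ≠ 0 :=
  prod_ne_zero_iff.mpr fun k _ => one_sub_mul_pow_ne_zero hq k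

lemma qBinom_zero_right (hq : ¬IsOfFinOrder q) (n : ℕ) : qBinom q n 0 = 1 := by
  simp [qBinom, qPoch_zero, qPoch_self_ne_zero hq]

lemma qBinom_self (hq : ¬IsOfFinOrder q) (n : ℕ) : qBinom q n n = 1 := by
  simp [qBinom, qPoch_zero, qPoch_self_ne_zero hq]

lemma qBinom_succ_succ (hq : ¬IsOfFinOrder q) {a i : ℕ} (h : i < a) :
    qBinom q (a + 1) (i + 1) = q ^ (i + 1) * qBinom q a (i + 1) + qBinom q a i := by
  obtain ⟨d, rfl⟩ := Nat.exists_eq_add_of_lt h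
  have h₁ : i + d + 1 + 1 - (i + 1) = d + 1 := by omega
  have h₂ : i + d + 1 - (i + 1) = d := by omega
  have h₃ : i + d + 1 - i = d + 1 := by omega
  have hP := qPoch_self_ne_zero hq
  have hL := one_sub_mul_pow_ne_zero hq
  simp only [qBinom, h₁, h₂, h₃, qPoch_succ q q (i + d + 1), qPoch_succ q q d, qPoch_succ q q i]
  rw [mul_div_assoc', div_add_div _ _ (by simp [hP, hL]) (by simp [hP, hL]),
    div_eq_div_iff (by simp [hP, hL]) (by simp [hP, hL])]
  ring

lemma qBinom_mul_qBinom_sub_comm (hq : ¬IsOfFinOrder q) {n k j : ℕ} (h : k + j ≤ n) :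
    qBinom q n k * qBinom q (n - k) j = qBinom q n j * qBinom q (n - j) k := by
  obtain ⟨d, rfl⟩ := Nat.exists_eq_add_of_le h
  have hP := qPoch_self_ne_zero hq
  simp only [qBinom, show k + j + d - k = j + d by omega, show k + j + d - j = k + d by omega,
    Nat.add_sub_cancel_left, div_mul_div_comm]
  rw [div_eq_div_iff (by simp [hP]) (by simp [hP])]
  ring

lemma sum_qBinom_succ_smul {M : Type*} [AddCommGroup M] [Module ℂ M]
    (hq : ¬IsOfFinOrder q) (a : ℕ) (f : ℕ → M) :
    ∑ k ∈ range (a + 2), qBinom q (a + 1) k • f k =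
      ∑ k ∈ range (a + 1), qBinom q a k • (q ^ k • f k + f (k + 1)) := by
  have pascal : ∀ i ∈ range a, qBinom q (a + 1) (i + 1) • f (i + 1) =
      qBinom q a (i + 1) • q ^ (i + 1) • f (i + 1) + qBinom q a i • f (i + 1) := by
    intro i hi
    rw [qBinom_succ_succ hq (mem_range.mp hi), add_smul, mul_comm, mul_smul]
  simp only [smul_add, sum_add_distrib]
  rw [sum_range_succ', sum_range_succ, sum_congr rfl pascal, sum_add_distrib,
    sum_range_succ' (fun k => qBinom q a k • q ^ k • f k),
    sum_range_succ (fun k => qBinom q a k • f (k + 1)),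
    qBinom_zero_right hq, qBinom_zero_right hq, qBinom_self hq, qBinom_self hq]
  simp only [pow_zero, one_smul]
  abel

lemma sum_range_sum_range_sub_comm {M : Type*} [AddCommMonoid M] (n : ℕ) (f : ℕ → ℕ → M) :
    ∑ k ∈ range (n + 1), ∑ j ∈ range (n - k + 1), f k j =
      ∑ k ∈ range (n + 1), ∑ j ∈ range (n - k + 1), f j k :=
  sum_comm' fun _ _ => by simp only [mem_range]; omega

noncomputable def qEGF (q : ℂ) : (ℕ → ℂ) →ₗ[ℂ] ℂ⟦X⟧ where
  toFun f := mk fun n => f n / qPoch q q n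
  map_add' f g := by ext n; simp [add_div]
  map_smul' c f := by ext n; simp [mul_div_assoc]

lemma coeff_qEGF (f : ℕ → ℂ) (n : ℕ) : coeff n (qEGF q f) = f n / qPoch q q n := by
  simp [qEGF]

lemma qEGF_injective (hq : ¬IsOfFinOrder q) : Function.Injective (qEGF q) := fun f g h =>
  funext fun n => by
    simpa [coeff_qEGF, div_left_inj' (qPoch_self_ne_zero hq n)] using congrArg (coeff n) h

lemma rescale_qEGF (c : ℂ) (f : ℕ → ℂ) :
    rescale c (qEGF q f) = qEGF q fun n => c ^ n * f n := by
  ext n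
  simp [coeff_rescale, coeff_qEGF, mul_div_assoc]

lemma qEGF_mul_qEGF (hq : ¬IsOfFinOrder q) (f g : ℕ → ℂ) :
    qEGF q f * qEGF q g =
      qEGF q fun n => ∑ k ∈ range (n + 1), qBinom q n k * f k * g (n - k) := by
  ext n
  rw [coeff_mul, Nat.sum_antidiagonal_eq_sum_range_succ_mk, coeff_qEGF, sum_div]
  refine sum_congr rfl fun k _ => ?_
  have := qPoch_self_ne_zero hq n
  have := qPoch_self_ne_zero hq k
  have := qPoch_self_ne_zero hq (n - k)
  simp only [coeff_qEGF, qBinom]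
  field_simp

lemma qEGF_sub_rescale_qEGF (hq : ¬IsOfFinOrder q) (f : ℕ → ℂ) :
    qEGF q f - rescale q (qEGF q f) = X * qEGF q fun n => f (n + 1) := by
  ext n
  rcases n with _ | n
  · rw [map_sub, coeff_rescale, pow_zero, one_mul, sub_self, coeff_zero_X_mul]
  · have hP := qPoch_self_ne_zero hq n
    have hL := one_sub_mul_pow_ne_zero hq n
    rw [map_sub, coeff_rescale, coeff_qEGF, coeff_succ_X_mul, coeff_qEGF, qPoch_succ]
    field_simp
    ring

lemma rescale_smul (a c : ℂ) (F : ℂ⟦X⟧) : rescale a (c • F) = c • rescale a F := by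
  ext n
  simp only [coeff_rescale, map_smul, smul_eq_mul]
  ring

lemma rescale_one_sub_C_mul_X (a c : ℂ) :
    rescale a (1 - C c * X) = 1 - C (c * a) * X := by
  have hC : rescale a (C c) = C c := by
    ext n
    rcases n with _ | n <;> simp [coeff_rescale, coeff_C]
  rw [map_sub, map_one, map_mul, rescale_X, hC, map_mul]
  ring

lemma rescale_qEGF_cauchyP_mul (hq : ¬IsOfFinOrder q) (u v : ℂ) :
    rescale q (qEGF q (cauchyP q u v)) * (1 - C v * X) =
      qEGF q (cauchyP q u v) * (1 - C u * X) := by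
  have hshift : (qEGF q fun n => cauchyP q u v (n + 1)) =
      u • qEGF q (cauchyP q u v) - v • rescale q (qEGF q (cauchyP q u v)) := by
    rw [rescale_qEGF, ← map_smul, ← map_smul, ← map_sub]
    congr 1
    funext n
    simp only [cauchyP_succ, Pi.sub_apply, Pi.smul_apply, smul_eq_mul]
    ring
  have h := qEGF_sub_rescale_qEGF hq (cauchyP q u v)
  rw [hshift, smul_eq_C_mul, smul_eq_C_mul] at h
  linear_combination -h

lemma eq_of_rescale_mul_eq (hq : ¬IsOfFinOrder q) {A B F G : ℂ⟦X⟧}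
    (hA : constantCoeff A = 1) (hB : constantCoeff B = 1)
    (hF : rescale q F * A = F * B) (hG : rescale q G * A = G * B)
    (h0 : constantCoeff F = constantCoeff G) : F = G := by
  rw [← sub_eq_zero]
  set H := F - G
  have hH : rescale q H * A = H * B := by simp only [H, map_sub, sub_mul, hF, hG]
  by_contra hne
  have hsplit : X ^ H.order.toNat * (C q ^ H.order.toNat * rescale q H.divXPowOrder * A) =
      X ^ H.order.toNat * (H.divXPowOrder * B) := by
    rw [← X_pow_order_mul_divXPowOrder (f := H), map_mul, map_pow, rescale_X] at hH
    linear_combination hH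
  set d := H.order.toNat
  have hcoeff : coeff d H ≠ 0 := coeff_order hne
  have hd : d ≠ 0 := by
    rintro hd
    rw [hd, coeff_zero_eq_constantCoeff_apply, map_sub, h0, sub_self] at hcoeff
    exact hcoeff rfl
  have := congrArg constantCoeff (X_pow_mul_cancel hsplit)
  simp only [map_mul, map_pow, constantCoeff_C, hA, hB, mul_one] at this
  rw [← coeff_zero_eq_constantCoeff_apply (rescale q _), coeff_rescale, pow_zero, one_mul,
    coeff_zero_eq_constantCoeff_apply, constantCoeff_divXPowOrder] at this
  exact hq (isOfFinOrder_iff_pow_eq_one.mpr ⟨d, Nat.pos_of_ne_zero hd,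
    mul_right_cancel₀ hcoeff (by rw [this, one_mul])⟩)

lemma qEGF_cauchyP_mul_qEGF_cauchyP_one_zero (hq : ¬IsOfFinOrder q) (x y : ℂ) :
    qEGF q (cauchyP q x y) * qEGF q (cauchyP q 1 0) = qEGF q (hRS2 q x y) := by
  rw [qEGF_mul_qEGF hq]
  congr 1
  funext n
  simp [hRS2, cauchyP_zero_right]

lemma rescale_qEGF_cauchyP_zero_right (hq : ¬IsOfFinOrder q) (u : ℂ) :
    rescale q (qEGF q (cauchyP q u 0)) = qEGF q (cauchyP q u 0) * (1 - C u * X) := by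
  simpa using rescale_qEGF_cauchyP_mul hq u 0

lemma rescale_qEGF_hRS2_mul (hq : ¬IsOfFinOrder q) (x y : ℂ) :
    rescale q (qEGF q (hRS2 q x y)) * (1 - C y * X) =
      qEGF q (hRS2 q x y) * ((1 - C x * X) * (1 - X)) := by
  have h1 : rescale q (qEGF q (cauchyP q 1 0)) = qEGF q (cauchyP q 1 0) * (1 - X) := by
    simpa using rescale_qEGF_cauchyP_zero_right hq 1
  rw [← qEGF_cauchyP_mul_qEGF_cauchyP_one_zero hq, map_mul]
  linear_combination rescale q (qEGF q (cauchyP q 1 0)) * rescale_qEGF_cauchyP_mul hq x y +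
    qEGF q (cauchyP q x y) * (1 - C x * X) * h1

lemma hRS2_eq_sum_qPoch_mul_pow (hq : ¬IsOfFinOrder q) (x y : ℂ) (n : ℕ) :
    hRS2 q x y n = ∑ k ∈ range (n + 1), qBinom q n k * qPoch y q k * x ^ (n - k) := by
  suffices h : qEGF q (hRS2 q x y) = qEGF q (cauchyP q 1 y) * qEGF q (cauchyP q x 0) by
    rw [qEGF_mul_qEGF hq] at h
    simpa [cauchyP_one_left, cauchyP_zero_right] using congrFun (qEGF_injective hq h) n
  refine eq_of_rescale_mul_eq hq (A := 1 - C y * X) (B := (1 - C x * X) * (1 - X))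
    (by simp) (by simp) (rescale_qEGF_hRS2_mul hq x y) ?_ ?_
  · have h1 : rescale q (qEGF q (cauchyP q 1 y)) * (1 - C y * X) =
        qEGF q (cauchyP q 1 y) * (1 - X) := by simpa using rescale_qEGF_cauchyP_mul hq 1 y
    rw [map_mul]
    linear_combination rescale q (qEGF q (cauchyP q x 0)) * h1 +
      qEGF q (cauchyP q 1 y) * (1 - X) * rescale_qEGF_cauchyP_zero_right hq x
  · rw [← coeff_zero_eq_constantCoeff_apply, ← coeff_zero_eq_constantCoeff_apply]
    simp [coeff_qEGF, coeff_mul, hRS2, cauchyP, qBinom, qPoch]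

noncomputable def dilatedCauchySum (q x y : ℂ) (a : ℕ) : ℂ⟦X⟧ :=
  ∑ k ∈ range (a + 1),
    (qBinom q a k * qPoch y q k * x ^ (a - k)) • rescale (q ^ k) (qEGF q (cauchyP q x y))

lemma rescale_pow_qEGF_cauchyP_sub (hq : ¬IsOfFinOrder q) (x y : ℂ) (k : ℕ) :
    rescale (q ^ k) (qEGF q (cauchyP q x y)) -
        (1 - X) * rescale (q ^ (k + 1)) (qEGF q (cauchyP q x y)) =
      (x * q ^ k) • rescale (q ^ k) (qEGF q (cauchyP q x y)) * X +
        (1 - y * q ^ k) • rescale (q ^ (k + 1)) (qEGF q (cauchyP q x y)) * X := by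
  have h := congrArg (rescale (q ^ k)) (rescale_qEGF_cauchyP_mul hq x y)
  rw [map_mul, map_mul, rescale_rescale, rescale_one_sub_C_mul_X, rescale_one_sub_C_mul_X,
    ← pow_succ'] at h
  simp only [smul_eq_C_mul, map_sub, map_one]
  linear_combination -h

lemma dilatedCauchySum_succ_mul_X (hq : ¬IsOfFinOrder q) (x y : ℂ) (a : ℕ) :
    dilatedCauchySum q x y (a + 1) * X =
      dilatedCauchySum q x y a - (1 - X) * rescale q (dilatedCauchySum q x y a) := by
  set R : ℕ → ℂ⟦X⟧ := fun k => rescale (q ^ k) (qEGF q (cauchyP q x y))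
  have hR : ∀ k, rescale q (R k) = R (k + 1) := fun k => by
    simp only [R, rescale_rescale, ← pow_succ]
  have hRR : ∀ k, R k - (1 - X) * R (k + 1) =
      (x * q ^ k) • (R k * X) + (1 - y * q ^ k) • (R (k + 1) * X) := fun k => by
    simpa only [smul_mul_assoc] using rescale_pow_qEGF_cauchyP_sub hq x y k
  calc dilatedCauchySum q x y (a + 1) * X
      = ∑ k ∈ range (a + 2), qBinom q (a + 1) k • (qPoch y q k * x ^ (a + 1 - k)) • (R k * X) := by
        simp only [dilatedCauchySum, sum_mul, smul_mul_assoc, mul_smul, R]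
    _ = ∑ k ∈ range (a + 1), (qBinom q a k * qPoch y q k * x ^ (a - k)) •
          (R k - (1 - X) * R (k + 1)) := by
        rw [sum_qBinom_succ_smul hq]
        refine sum_congr rfl fun k hk => ?_
        rw [show a + 1 - k = a - k + 1 by have := mem_range.mp hk; omega, Nat.add_sub_add_right,
          pow_succ x (a - k), qPoch_succ, hRR]
        module
    _ = dilatedCauchySum q x y a - (1 - X) * rescale q (dilatedCauchySum q x y a) := by
        simp only [dilatedCauchySum, map_sum, rescale_smul, hR, smul_sub, mul_sum,
          mul_smul_comm, sum_sub_distrib, R]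

lemma qEGF_cauchyP_mul_qEGF_hRS2_add (hq : ¬IsOfFinOrder q) (x y : ℂ) (a : ℕ) :
    qEGF q (cauchyP q x y) * qEGF q (fun n => hRS2 q x y (a + n)) =
      dilatedCauchySum q x y a * qEGF q (hRS2 q x y) := by
  induction a with
  | zero => simp [dilatedCauchySum, qBinom_zero_right hq, qPoch_zero, rescale_one, mul_comm]
  | succ a ih =>
    have hG : X * qEGF q (fun n => hRS2 q x y (a + 1 + n)) =
        qEGF q (fun n => hRS2 q x y (a + n)) -
          rescale q (qEGF q (fun n => hRS2 q x y (a + n))) := by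
      rw [qEGF_sub_rescale_qEGF hq]
      simp only [add_assoc, add_comm 1]
    have hne : (X : ℂ⟦X⟧) * (1 - C x * X) ≠ 0 :=
      mul_ne_zero X_ne_zero fun h => by simpa using congrArg constantCoeff h
    have ih' := congrArg (rescale q) ih
    rw [map_mul, map_mul] at ih'
    apply mul_left_cancel₀ hne
    -- `t (1 - xt) C G_{a+1} = (1 - xt) C G_a - (1 - yt) C(qt) G_a(qt)`; apply the induction
    -- hypothesis at `t` and `qt`, the equation of `H`, and the recursion of `S_{a+1}`.
    linear_combination (1 - C x * X) * qEGF q (cauchyP q x y) * hG + (1 - C x * X) * ih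
      + rescale q (qEGF q (fun n => hRS2 q x y (a + n))) * rescale_qEGF_cauchyP_mul hq x y
      - (1 - C y * X) * ih'
      - rescale q (dilatedCauchySum q x y a) * rescale_qEGF_hRS2_mul hq x y
      - (1 - C x * X) * qEGF q (hRS2 q x y) * dilatedCauchySum_succ_mul_X hq x y a

noncomputable def dilatedCauchyConv (q x y : ℂ) (m k : ℕ) : ℂ :=
  ∑ l ∈ range (m + 1), qBinom q m l * q ^ (k * l) * cauchyP q x y l * hRS2 q x y (m - l)

lemma sum_qBinom_cauchyP_mul_hRS2_add (hq : ¬IsOfFinOrder q) (x y : ℂ) (a b : ℕ) :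
    ∑ l ∈ range (b + 1), qBinom q b l * cauchyP q x y l * hRS2 q x y (a + b - l) =
      ∑ k ∈ range (a + 1),
        qBinom q a k * qPoch y q k * x ^ (a - k) * dilatedCauchyConv q x y b k := by
  have h := qEGF_cauchyP_mul_qEGF_hRS2_add hq x y a
  rw [dilatedCauchySum, sum_mul] at h
  simp only [rescale_qEGF, qEGF_mul_qEGF hq, ← map_smul, ← map_sum] at h
  have hb := congrFun (qEGF_injective hq h) b
  simp only [Finset.sum_apply, Pi.smul_apply, smul_eq_mul] at hb
  rw [sum_congr rfl fun l hl => by rw [Nat.add_sub_assoc (mem_range_succ_iff.mp hl)], hb]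
  simp only [dilatedCauchyConv, mul_sum, pow_mul]
  refine sum_congr rfl fun k _ => sum_congr rfl fun l _ => ?_
  ring

lemma sum_qBinom_mul_sum_qBinom_comm (hq : ¬IsOfFinOrder q) (n : ℕ) (c w F : ℕ → ℂ) :
    ∑ k ∈ range (n + 1), qBinom q n k * c k *
        ∑ j ∈ range (n - k + 1), qBinom q (n - k) j * c j * w (n - k - j) * F j =
      ∑ k ∈ range (n + 1), qBinom q n k * c k *
        ∑ j ∈ range (n - k + 1), qBinom q (n - k) j * c j * w (n - k - j) * F k := by
  simp only [mul_sum]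
  rw [sum_range_sum_range_sub_comm]
  refine sum_congr rfl fun k hk => sum_congr rfl fun j hj => ?_
  simp only [mem_range] at hk hj
  rw [show n - j - k = n - k - j by omega]
  linear_combination c j * c k * w (n - k - j) * F k *
    qBinom_mul_qBinom_sub_comm hq (show j + k ≤ n by omega)

end RogersSzego

open RogersSzego

/-- Linearization identity derived from the Rogers formula (Corollary 3.2). -/
theorem linearization_from_rogers (q x y : ℂ) (hq : ‖q‖ < 1) (n m : ℕ) :
    ∑ k ∈ Finset.range (n + 1), ∑ l ∈ Finset.range (m + 1),
      qBinom q n k * qBinom q m l * qPoch y q k * cauchyP q x y l *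
        hRS2 q x y (n + m - k - l) =
    ∑ k ∈ Finset.range (n + 1), ∑ l ∈ Finset.range (m + 1),
      qBinom q n k * qBinom q m l * qPoch y q k * q ^ (k * l) * cauchyP q x y l *
        hRS2 q x y (n - k) * hRS2 q x y (m - l) := by
  have hq' : ¬IsOfFinOrder q := fun h => hq.ne h.norm_eq_one
  calc _ = ∑ k ∈ range (n + 1), qBinom q n k * qPoch y q k *
        ∑ l ∈ range (m + 1), qBinom q m l * cauchyP q x y l * hRS2 q x y (n - k + m - l) := by
        refine sum_congr rfl fun k hk => ?_
        rw [mul_sum]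
        refine sum_congr rfl fun l _ => ?_
        rw [show n + m - k - l = n - k + m - l by have := mem_range_succ_iff.mp hk; omega]
        ring
    _ = ∑ k ∈ range (n + 1), qBinom q n k * qPoch y q k *
        ∑ j ∈ range (n - k + 1),
          qBinom q (n - k) j * qPoch y q j * x ^ (n - k - j) * dilatedCauchyConv q x y m j := by
        simp only [sum_qBinom_cauchyP_mul_hRS2_add hq']
    _ = ∑ k ∈ range (n + 1), qBinom q n k * qPoch y q k *
        ∑ j ∈ range (n - k + 1),
          qBinom q (n - k) j * qPoch y q j * x ^ (n - k - j) * dilatedCauchyConv q x y m k :=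
        sum_qBinom_mul_sum_qBinom_comm hq' n (qPoch y q) (x ^ ·) _
    _ = ∑ k ∈ range (n + 1),
          qBinom q n k * qPoch y q k * (hRS2 q x y (n - k) * dilatedCauchyConv q x y m k) := by
        simp only [← sum_mul, ← hRS2_eq_sum_qPoch_mul_pow hq']
    _ = _ := by
        simp only [dilatedCauchyConv, mul_sum]
        refine sum_congr rfl fun k _ => sum_congr rfl fun l _ => ?_
        ring
end
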